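/- Let D > 0, d > 0, ρ > 0. Then (1/D)·∫_{−D/2}^{D/2} log₂(1 + ρ/(d² + y²)) dy = (2/D)·(g(d² + ρ) − g(d²)), where g(a) = (D/2)·log₂(D²/4 + a) − D·log₂(e) + 2·log₂(e)·√a·arctan(D/(2√a)). -/

import Mathlib

open Real

noncomputable def g (D a : ℝ) : ℝ :=
  (D/2) * Real.logb 2 (D^2/4 + a) - D * Real.logb 2 (Real.exp 1)
    + 2 * Real.logb 2 (Real.exp 1) * Real.sqrt a * Real.arctan (D / (2 * Real.sqrt a))

/-!
Since `1 + ρ / (d² + y²) = (d² + ρ + y²) / (d² + y²)`, the integrand splits as a difference of two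
integrands `log (a + y²)`, each with the elementary primitive
`y log (a + y²) - 2y + 2√a arctan (y / √a)`. This primitive is odd, so over `[-D/2, D/2]` each
integral is twice its value at `D/2`, which is `log 2 · g D a`.
-/

noncomputable def primitiveLogAddSq (a y : ℝ) : ℝ :=
  y * log (a + y ^ 2) - 2 * y + 2 * √a * arctan (y / √a)

theorem primitiveLogAddSq_neg (a y : ℝ) :
    primitiveLogAddSq a (-y) = -primitiveLogAddSq a y := by
  simp only [primitiveLogAddSq, neg_sq, neg_div, arctan_neg]
  ring

theorem hasDerivAt_primitiveLogAddSq {a : ℝ} (ha : 0 < a) (y : ℝ) :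
    HasDerivAt (primitiveLogAddSq a) (log (a + y ^ 2)) y := by
  have hpos : a + y ^ 2 ≠ 0 := by positivity
  refine ((((hasDerivAt_id' y).mul (((hasDerivAt_pow 2 y).const_add a).log hpos)).sub
    ((hasDerivAt_id' y).const_mul 2)).add
    (((hasDerivAt_id' y).div_const √a).arctan.const_mul (2 * √a))).congr_deriv ?_
  have hsq : √a ^ 2 = a := sq_sqrt ha.le
  field_simp
  rw [hsq]
  ring

theorem intervalIntegrable_log_add_sq {a : ℝ} (ha : 0 < a) (b c : ℝ) :
    IntervalIntegrable (fun y => log (a + y ^ 2)) MeasureTheory.volume b c :=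
  ((continuous_const.add (continuous_pow 2)).continuousOn.log fun y _ =>
    (add_pos_of_pos_of_nonneg ha (sq_nonneg y)).ne').intervalIntegrable

theorem integral_log_add_sq_symm {a : ℝ} (ha : 0 < a) (c : ℝ) :
    ∫ y in (-c)..c, log (a + y ^ 2) = 2 * primitiveLogAddSq a c := by
  rw [intervalIntegral.integral_eq_sub_of_hasDerivAt
    (fun y _ => hasDerivAt_primitiveLogAddSq ha y) (intervalIntegrable_log_add_sq ha _ _),
    primitiveLogAddSq_neg]
  ring

theorem logb_one_add_div_eq_sub {b x ρ : ℝ} (hx : 0 < x) (hxρ : 0 < x + ρ) :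
    logb b (1 + ρ / x) = (log (x + ρ) - log x) / log b := by
  rw [logb, ← log_div hxρ.ne' hx.ne', add_div, div_self hx.ne']

theorem g_eq_primitiveLogAddSq (D a : ℝ) :
    g D a = primitiveLogAddSq a (D / 2) / log 2 := by
  simp only [g, primitiveLogAddSq, logb, log_exp, div_pow, div_div]
  ring_nf

theorem stmt_10_general (D d ρ : ℝ) (hd : 0 < d) (hρ : 0 < ρ) :
    (1/D) * ∫ y in (-(D/2))..(D/2), Real.logb 2 (1 + ρ / (d^2 + y^2))
      = (2/D) * (g D (d^2 + ρ) - g D (d^2)) := by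
  have hd2 : 0 < d ^ 2 := by positivity
  have hd2ρ : 0 < d ^ 2 + ρ := by positivity
  have hsplit : ∀ y : ℝ, logb 2 (1 + ρ / (d ^ 2 + y ^ 2))
      = (log (d ^ 2 + ρ + y ^ 2) - log (d ^ 2 + y ^ 2)) / log 2 := fun y => by
    rw [logb_one_add_div_eq_sub (by positivity) (by positivity), add_right_comm]
  simp_rw [hsplit]
  rw [intervalIntegral.integral_div, intervalIntegral.integral_sub
    (intervalIntegrable_log_add_sq hd2ρ _ _) (intervalIntegrable_log_add_sq hd2 _ _),
    integral_log_add_sq_symm hd2ρ, integral_log_add_sq_symm hd2,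
    g_eq_primitiveLogAddSq, g_eq_primitiveLogAddSq]
  ring

theorem stmt_10 (D d ρ : ℝ) (hD : 0 < D) (hd : 0 < d) (hρ : 0 < ρ) :
    (1/D) * ∫ y in (-(D/2))..(D/2), Real.logb 2 (1 + ρ / (d^2 + y^2))
      = (2/D) * (g D (d^2 + ρ) - g D (d^2)) :=
  stmt_10_general D d ρ hd hρ
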